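/- If X = (X_k)_{k=0,...,n} is a nonnegative submartingale with E[X_n^p] < ∞ for some p > 1, and q = p/(p−1), then E[X̄_n^p] ≤ q^p E[X_n^p] − q E[X_0^p], where X̄_n = max{X_0, ..., X_n}. -/

import Mathlib

open MeasureTheory Finset
open scoped ENNReal

/-!
For nonnegative reals `a₀, …, aₙ` with running maxima `Mₖ = max_{i ≤ k} aᵢ`, Young's inequality
applied to each increment of the running maximum telescopes to the pathwise bound
`Mₙ^p + p q ∑_{k<n} Mₖ^(p-1) (aₖ₊₁ - aₖ) ≤ q^p aₙ^p - q a₀^p`.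
Along the paths of `X`, each weight `Mₖ^(p-1)` is nonnegative, `𝓕ₖ`-measurable and in `L^q`
(Hölder makes the products integrable), so the submartingale property gives every summand a
nonnegative expectation; taking expectations of the pathwise bound proves the inequality.
-/

section RunningMax

variable {α : Type*} [SemilatticeSup α]

def runningMax (a : ℕ → α) (n : ℕ) : α :=
  (range (n + 1)).sup' nonempty_range_add_one a

@[simp]
lemma runningMax_zero (a : ℕ → α) : runningMax a 0 = a 0 := by
  simp [runningMax]

lemma runningMax_succ (a : ℕ → α) (n : ℕ) :
    runningMax a (n + 1) = a (n + 1) ⊔ runningMax a n := by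
  classical
  simp only [runningMax]
  rw [Finset.sup'_congr _ (range_add_one (n := n + 1)) fun _ _ => rfl, Finset.sup'_insert]

lemma le_runningMax (a : ℕ → α) {k n : ℕ} (hkn : k ≤ n) : a k ≤ runningMax a n :=
  Finset.le_sup' a (mem_range.2 (Nat.lt_succ_of_le hkn))

lemma runningMax_apply {Ω : Type*} (X : ℕ → Ω → α) (n : ℕ) (ω : Ω) :
    runningMax X n ω = runningMax (fun k => X k ω) n :=
  Finset.sup'_apply _ _ _

end RunningMax

section Pathwise

variable {p q x : ℝ} {a : ℕ → ℝ}

lemma Real.rpow_sub_one_mul_self (hx : 0 ≤ x) (hp : p ≠ 0) : x ^ (p - 1) * x = x ^ p := by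
  rw [← Real.rpow_add_one' hx (by simpa using hp), sub_add_cancel]

lemma Real.HolderConjugate.rpow_sub_one_rpow (hpq : p.HolderConjugate q) (hx : 0 ≤ x) :
    (x ^ (p - 1)) ^ q = x ^ p := by
  rw [← Real.rpow_mul hx, hpq.sub_one_mul_conj]

lemma Real.HolderConjugate.sup_rpow_sub_rpow_le (hpq : p.HolderConjugate q) {b c : ℝ}
    (hb : 0 ≤ b) (hc : 0 ≤ c) :
    (c ⊔ b) ^ p - b ^ p ≤ q * c * ((c ⊔ b) ^ (p - 1) - b ^ (p - 1)) := by
  rcases le_total c b with hcb | hbc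
  · simp [sup_of_le_right hcb]
  · have young := Real.young_inequality_of_nonneg hc (Real.rpow_nonneg hb (p - 1)) hpq
    rw [hpq.rpow_sub_one_rpow hb] at young
    rw [sup_of_le_left hbc, mul_sub, mul_assoc, mul_comm c,
      Real.rpow_sub_one_mul_self hc hpq.ne_zero]
    have hq_young := mul_le_mul_of_nonneg_left young hpq.symm.nonneg
    have hq : q * (c ^ p / p + b ^ p / q) = (q - 1) * c ^ p + b ^ p := by
      field_simp [hpq.ne_zero, hpq.symm.ne_zero]
      linear_combination -c ^ p * hpq.mul_eq_add
    linarith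

lemma runningMax_nonneg (ha : ∀ k, 0 ≤ a k) (n : ℕ) : 0 ≤ runningMax a n :=
  (ha 0).trans (le_runningMax a n.zero_le)

lemma Real.HolderConjugate.runningMax_rpow_add_sum_le_mul (hpq : p.HolderConjugate q)
    (ha : ∀ k, 0 ≤ a k) (n : ℕ) :
    runningMax a n ^ p + (q - 1) * a 0 ^ p
        + q * ∑ k ∈ range n, runningMax a k ^ (p - 1) * (a (k + 1) - a k)
      ≤ q * runningMax a n ^ (p - 1) * a n := by
  induction n with
  | zero =>
    rw [runningMax_zero, mul_assoc, Real.rpow_sub_one_mul_self (ha 0) hpq.ne_zero]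
    simp only [range_zero, sum_empty]
    linarith
  | succ n ih =>
    have step := hpq.sup_rpow_sub_rpow_le (runningMax_nonneg ha n) (ha (n + 1))
    rw [sum_range_succ, runningMax_succ]
    linarith

lemma Real.HolderConjugate.runningMax_rpow_add_sum_le (hpq : p.HolderConjugate q)
    (ha : ∀ k, 0 ≤ a k) (n : ℕ) :
    runningMax a n ^ p + p * q * ∑ k ∈ range n, runningMax a k ^ (p - 1) * (a (k + 1) - a k)
      ≤ q ^ p * a n ^ p - q * a 0 ^ p := by
  have hM := runningMax_nonneg ha n
  have young := Real.young_inequality_of_nonneg (mul_nonneg hpq.symm.nonneg (ha n))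
    (Real.rpow_nonneg hM (p - 1)) hpq
  rw [hpq.rpow_sub_one_rpow hM, Real.mul_rpow hpq.symm.nonneg (ha n)] at young
  have h := mul_le_mul_of_nonneg_left ((hpq.runningMax_rpow_add_sum_le_mul ha n).trans
    ((mul_right_comm _ _ _).trans_le young)) hpq.nonneg
  have e : p * (q ^ p * a n ^ p / p + runningMax a n ^ p / q)
      = q ^ p * a n ^ p + (p - 1) * runningMax a n ^ p := by
    rw [← hpq.div_conj_eq_sub_one]
    field_simp [hpq.ne_zero, hpq.symm.ne_zero]
  rw [e] at h
  linear_combination h - a 0 ^ p * hpq.mul_eq_add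

end Pathwise

namespace MeasureTheory

variable {Ω : Type*} {m0 : MeasurableSpace Ω} {μ : Measure Ω}

lemma StronglyAdapted.runningMax {ℱ : Filtration ℕ m0} {X : ℕ → Ω → ℝ}
    (hX : StronglyAdapted ℱ X) : StronglyAdapted ℱ (runningMax X) := fun n =>
  Finset.sup'_induction (p := StronglyMeasurable[ℱ n]) _ _
    (fun _ hf _ hg => @StronglyMeasurable.sup _ _ _ _ (ℱ n) _ _ _ hf hg)
    fun k hk => (hX k).mono (ℱ.mono (Nat.le_of_lt_succ (mem_range.1 hk)))

lemma memLp_runningMax {X : ℕ → Ω → ℝ} {p : ℝ≥0∞} {n : ℕ} (hX : ∀ k ≤ n, MemLp (X k) p μ) :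
    MemLp (runningMax X n) p μ :=
  Finset.sup'_induction (p := (MemLp · p μ)) _ _ (fun _ hf _ hg => hf.sup hg)
    fun k hk => hX k (Nat.le_of_lt_succ (mem_range.1 hk))

lemma memLp_ofReal_iff_integrable_rpow {f : Ω → ℝ} {p : ℝ} (hf : AEStronglyMeasurable f μ)
    (hf0 : 0 ≤ᵐ[μ] f) (hp : 0 < p) :
    MemLp f (ENNReal.ofReal p) μ ↔ Integrable (fun ω => f ω ^ p) μ := by
  rw [← integrable_norm_rpow_iff hf (by simpa using hp) ENNReal.ofReal_ne_top,
    ENNReal.toReal_ofReal hp.le]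
  refine integrable_congr ?_
  filter_upwards [hf0] with ω hω
  rw [Real.norm_of_nonneg hω]

lemma MemLp.integrable_rpow_sub_one_mul {p q : ℝ} (hpq : p.HolderConjugate q) {f g : Ω → ℝ}
    (hf : MemLp f (ENNReal.ofReal p) μ) (hf0 : 0 ≤ᵐ[μ] f) (hg : MemLp g (ENNReal.ofReal p) μ) :
    Integrable (fun ω => f ω ^ (p - 1) * g ω) μ := by
  have hfq : MemLp (fun ω => f ω ^ (p - 1)) (ENNReal.ofReal q) μ := by
    refine (memLp_ofReal_iff_integrable_rpow
      (hf.1.aemeasurable.pow_const _).aestronglyMeasurable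
      (hf0.mono fun ω hω => Real.rpow_nonneg hω _) hpq.symm.pos).2 ?_
    refine ((memLp_ofReal_iff_integrable_rpow hf.1 hf0 hpq.pos).1 hf).congr ?_
    filter_upwards [hf0] with ω hω
    rw [hpq.rpow_sub_one_rpow hω]
  have := hpq.symm.ennrealOfReal
  exact hfq.integrable_mul hg

variable {ℱ : Filtration ℕ m0} {X : ℕ → Ω → ℝ}

lemma Submartingale.memLp_of_le (hX : Submartingale X ℱ μ) {p : ℝ≥0∞} (hp : 1 ≤ p) {k n : ℕ}
    (hkn : k ≤ n) (hk : 0 ≤ᵐ[μ] X k) (hn : MemLp (X n) p μ) : MemLp (X k) p μ := by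
  refine (hn.condExp (m := ℱ k) hp).of_le
    ((hX.stronglyMeasurable k).mono (ℱ.le k)).aestronglyMeasurable ?_
  filter_upwards [hk, hX.ae_le_condExp hkn] with ω h0 hle
  rw [Real.norm_of_nonneg h0]
  exact hle.trans (Real.le_norm_self _)

lemma Submartingale.integral_mul_sub_nonneg [IsFiniteMeasure μ] (hX : Submartingale X ℱ μ)
    {k j : ℕ} (hkj : k ≤ j) {g : Ω → ℝ} (hg : StronglyMeasurable[ℱ k] g) (hg0 : 0 ≤ᵐ[μ] g)
    (hgk : Integrable (fun ω => g ω * X k ω) μ) (hgj : Integrable (fun ω => g ω * X j ω) μ) :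
    0 ≤ ∫ ω, g ω * (X j ω - X k ω) ∂μ := by
  have hpull : μ[g * X j | ℱ k] =ᵐ[μ] g * μ[X j | ℱ k] :=
    condExp_mul_of_stronglyMeasurable_left hg hgj (hX.integrable j)
  have hle : ∫ ω, g ω * X k ω ∂μ ≤ ∫ ω, g ω * X j ω ∂μ :=
    calc ∫ ω, g ω * X k ω ∂μ
        ≤ ∫ ω, (g * μ[X j | ℱ k]) ω ∂μ := by
          refine integral_mono_ae hgk (integrable_condExp.congr hpull) ?_
          filter_upwards [hg0, hX.ae_le_condExp hkj] with ω hgω hleω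
          exact mul_le_mul_of_nonneg_left hleω hgω
      _ = ∫ ω, (μ[g * X j | ℱ k]) ω ∂μ := (integral_congr_ae hpull).symm
      _ = ∫ ω, g ω * X j ω ∂μ := integral_condExp (ℱ.le k)
  simp_rw [mul_sub]
  rw [integral_sub hgj hgk]
  exact sub_nonneg.2 hle

lemma integrable_mul_succ_sub {g : ℕ → Ω → ℝ} {k n : ℕ}
    (hgX : ∀ k ≤ n, ∀ j ≤ n, Integrable (fun ω => g k ω * X j ω) μ) (hk : k < n) :
    Integrable (fun ω => g k ω * (X (k + 1) ω - X k ω)) μ := by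
  simp_rw [mul_sub]
  exact (hgX k hk.le (k + 1) hk).sub (hgX k hk.le k hk.le)

lemma Submartingale.integral_sum_mul_sub_nonneg [IsFiniteMeasure μ] (hX : Submartingale X ℱ μ)
    {g : ℕ → Ω → ℝ} (hg : StronglyAdapted ℱ g) (hg0 : ∀ k, 0 ≤ᵐ[μ] g k) {n : ℕ}
    (hgX : ∀ k ≤ n, ∀ j ≤ n, Integrable (fun ω => g k ω * X j ω) μ) :
    0 ≤ ∫ ω, ∑ k ∈ range n, g k ω * (X (k + 1) ω - X k ω) ∂μ := by
  rw [integral_finsetSum _ fun k hk => integrable_mul_succ_sub hgX (mem_range.1 hk)]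
  refine sum_nonneg fun k hk => ?_
  have hk := mem_range.1 hk
  exact hX.integral_mul_sub_nonneg k.le_succ (hg k) (hg0 k) (hgX k hk.le k hk.le)
    (hgX k hk.le (k + 1) hk)

theorem Submartingale.integral_runningMax_rpow_le [IsFiniteMeasure μ] {p q : ℝ}
    (hpq : p.HolderConjugate q) (hX : Submartingale X ℱ μ) (hpos : ∀ k, 0 ≤ᵐ[μ] X k) {n : ℕ}
    (hint : Integrable (fun ω => X n ω ^ p) μ) :
    ∫ ω, runningMax X n ω ^ p ∂μ ≤ q ^ p * ∫ ω, X n ω ^ p ∂μ - q * ∫ ω, X 0 ω ^ p ∂μ := by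
  have hXn : MemLp (X n) (ENNReal.ofReal p) μ := (memLp_ofReal_iff_integrable_rpow
    ((hX.stronglyMeasurable n).mono (ℱ.le n)).aestronglyMeasurable (hpos n) hpq.pos).2 hint
  have hXp : ∀ k ≤ n, MemLp (X k) (ENNReal.ofReal p) μ := fun k hk =>
    hX.memLp_of_le (by simpa using hpq.lt.le) hk (hpos k) hXn
  have hMp : ∀ k ≤ n, MemLp (runningMax X k) (ENNReal.ofReal p) μ := fun k hk =>
    memLp_runningMax fun i hi => hXp i (hi.trans hk)
  have hM0 : ∀ k, 0 ≤ᵐ[μ] runningMax X k := fun k =>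
    (hpos 0).mono fun ω h => h.trans (le_runningMax X k.zero_le ω)
  have hprod : ∀ k ≤ n, ∀ j ≤ n, Integrable (fun ω => runningMax X k ω ^ (p - 1) * X j ω) μ :=
    fun k hk j hj => (hMp k hk).integrable_rpow_sub_one_mul hpq (hM0 k) (hXp j hj)
  have hsum := hX.integral_sum_mul_sub_nonneg
    (fun k => ((hX.stronglyAdapted.runningMax k).measurable.pow_const (p - 1)).stronglyMeasurable)
    (fun k => (hM0 k).mono fun ω h => Real.rpow_nonneg h _) hprod
  have hpath : ∀ᵐ ω ∂μ, runningMax X n ω ^ p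
      + p * q * ∑ k ∈ range n, runningMax X k ω ^ (p - 1) * (X (k + 1) ω - X k ω)
      ≤ q ^ p * X n ω ^ p - q * X 0 ω ^ p := by
    filter_upwards [ae_all_iff.2 hpos] with ω hω
    simpa only [runningMax_apply] using hpq.runningMax_rpow_add_sum_le hω n
  have hMn := (memLp_ofReal_iff_integrable_rpow (hMp n le_rfl).1 (hM0 n) hpq.pos).1 (hMp n le_rfl)
  have hX0 := (memLp_ofReal_iff_integrable_rpow (hXp 0 n.zero_le).1 (hpos 0) hpq.pos).1
    (hXp 0 n.zero_le)
  have hS := integrable_finsetSum (range n) fun k hk =>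
    integrable_mul_succ_sub hprod (mem_range.1 hk)
  have h := integral_mono_ae (hMn.add (hS.const_mul (p * q)))
    ((hint.const_mul _).sub (hX0.const_mul _)) hpath
  simp only [Pi.add_apply, Pi.sub_apply] at h
  rw [integral_add hMn (hS.const_mul _), integral_sub (hint.const_mul _) (hX0.const_mul _),
    integral_const_mul, integral_const_mul, integral_const_mul] at h
  linarith [mul_nonneg (mul_nonneg hpq.nonneg hpq.symm.nonneg) hsum]

end MeasureTheory

theorem stmt8 {Ω : Type*} {m0 : MeasurableSpace Ω} {μ : Measure Ω} [IsProbabilityMeasure μ]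
    (ℱ : Filtration ℕ m0) (X : ℕ → Ω → ℝ) (n : ℕ)
    (hX : Submartingale X ℱ μ) (hpos : ∀ k, 0 ≤ᵐ[μ] X k)
    (p : ℝ) (hp : 1 < p) (q : ℝ) (hq : q = p / (p - 1))
    (hint : Integrable (fun ω => X n ω ^ p) μ) :
    (∫ ω, ((Finset.range (n + 1)).sup' Finset.nonempty_range_add_one (fun k => X k ω)) ^ p ∂μ)
      ≤ q ^ p * (∫ ω, X n ω ^ p ∂μ) - q * (∫ ω, X 0 ω ^ p ∂μ) := by
  have hpq : p.HolderConjugate q := (Real.holderConjugate_iff_eq_conjExponent hp).2 hq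
  have h := hX.integral_runningMax_rpow_le hpq hpos hint
  simp only [runningMax_apply] at h
  exact h
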